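/- Let a₁, a₂, a₃ be distinct nonzero points of 𝔻 with a₁ + \bar{a₁}a₂a₃ = a₂ + a₃, let B(z) = z ∏_{i=1}^{3}(z-a_i)/(1-\bar{a_i}z), and let M(z) = -(z-a₁)/(1-\bar{a₁}z). Then B ∘ M = B if and only if a₃ = (a₁ - a₂)/(1 - \bar{a₁}a₂). -/

import Mathlib

open Complex ComplexConjugate

/-!
Write `φ_b z = (z - b) / (1 - conj b z)` (`blaschkeFactor b`), so that `M = -φ_{a₁}`
(`discInvolution a₁`). `M` is an involution of the disc exchanging `0` and `a₁`, and it has at most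
one fixed point there: its fixed points are the roots of `conj a₁ z² - 2z + a₁`, whose product has
modulus one. If `B ∘ M = B`, then `M` permutes the zeros `0, a₁, a₂, a₃` of `B`, so it maps
`{a₂, a₃}` into itself without fixing both points, i.e. `M a₂ = a₃`.

Conversely, `φ_b ∘ M` is a unimodular multiple of `φ_{M b}`, and the constants attached to `b` and
`M b` cancel because `(1 - conj a₁ b) (1 - conj a₁ (M b)) = 1 - |a₁|²` is real. Hence each of the
products `φ₀ φ_{a₁}` and `φ_{a₂} φ_{M a₂}` is `M`-invariant, and so is `B` when `a₃ = M a₂`.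
-/

noncomputable def blaschkeFactor (a z : ℂ) : ℂ := (z - a) / (1 - conj a * z)

noncomputable def discInvolution (a z : ℂ) : ℂ := -blaschkeFactor a z

section

variable {a b z w : ℂ}

lemma one_sub_conj_mul_ne_zero (ha : ‖a‖ < 1) (hz : ‖z‖ < 1) : 1 - conj a * z ≠ 0 := by
  have hlt : ‖conj a * z‖ < 1 := by
    rw [norm_mul, norm_conj]
    exact mul_lt_one_of_nonneg_of_lt_one_left (norm_nonneg a) ha hz.le
  intro h
  rw [← sub_eq_zero.mp h, norm_one] at hlt
  exact hlt.false

lemma sq_norm_one_sub_conj_mul_sub_sq_norm_sub (a z : ℂ) :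
    ‖1 - conj a * z‖ ^ 2 - ‖z - a‖ ^ 2 = (1 - ‖a‖ ^ 2) * (1 - ‖z‖ ^ 2) := by
  simp only [Complex.sq_norm, normSq_apply, sub_re, sub_im, one_re, one_im, mul_re, mul_im,
    conj_re, conj_im]
  ring

lemma norm_blaschkeFactor_lt_one (ha : ‖a‖ < 1) (hz : ‖z‖ < 1) : ‖blaschkeFactor a z‖ < 1 := by
  have hd := one_sub_conj_mul_ne_zero ha hz
  rw [blaschkeFactor, norm_div, div_lt_one (norm_pos_iff.mpr hd)]
  refine lt_of_pow_lt_pow_left₀ 2 (norm_nonneg _) (sub_pos.mp ?_)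
  rw [sq_norm_one_sub_conj_mul_sub_sq_norm_sub]
  have ha2 : ‖a‖ ^ 2 < 1 := pow_lt_one₀ (norm_nonneg a) ha two_ne_zero
  have hz2 : ‖z‖ ^ 2 < 1 := pow_lt_one₀ (norm_nonneg z) hz two_ne_zero
  exact mul_pos (sub_pos.mpr ha2) (sub_pos.mpr hz2)

lemma blaschkeFactor_eq_zero_iff (ha : ‖a‖ < 1) (hz : ‖z‖ < 1) :
    blaschkeFactor a z = 0 ↔ z = a := by
  simp [blaschkeFactor, one_sub_conj_mul_ne_zero ha hz, sub_eq_zero]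

@[simp]
lemma blaschkeFactor_zero_left (z : ℂ) : blaschkeFactor 0 z = z := by
  simp [blaschkeFactor]

lemma norm_discInvolution_lt_one (ha : ‖a‖ < 1) (hz : ‖z‖ < 1) : ‖discInvolution a z‖ < 1 := by
  rw [discInvolution, norm_neg]
  exact norm_blaschkeFactor_lt_one ha hz

@[simp]
lemma discInvolution_zero_right (a : ℂ) : discInvolution a 0 = a := by
  simp [discInvolution, blaschkeFactor]

@[simp]
lemma discInvolution_self (a : ℂ) : discInvolution a a = 0 := by
  simp [discInvolution, blaschkeFactor]

lemma discInvolution_eq_div (a z : ℂ) : discInvolution a z = (a - z) / (1 - conj a * z) := by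
  rw [discInvolution, blaschkeFactor, ← neg_div, neg_sub]

lemma blaschkeFactor_div (b : ℂ) {n d : ℂ} (hd : d ≠ 0) :
    blaschkeFactor b (n / d) = (n - b * d) / (d - conj b * n) := by
  have hnum : n / d - b = (n - b * d) / d := by field_simp
  have hden : 1 - conj b * (n / d) = (d - conj b * n) / d := by field_simp
  rw [blaschkeFactor, hnum, hden, div_div_div_cancel_right₀ hd]

lemma blaschkeFactor_div_left {n p : ℂ} (z : ℂ) (hp : p ≠ 0) :
    blaschkeFactor (n / p) z = conj p / p * ((p * z - n) / (conj p - conj n * z)) := by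
  have hp' : conj p ≠ 0 := (map_ne_zero _).mpr hp
  have hnum : z - n / p = (p * z - n) / p := by field_simp
  have hden : 1 - conj (n / p) * z = (conj p - conj n * z) / conj p := by
    rw [map_div₀]; field_simp
  rw [blaschkeFactor, hnum, hden, div_div_div_eq, mul_comm (p * z - n), ← div_mul_div_comm]

lemma discInvolution_discInvolution (ha : ‖a‖ < 1) (hz : ‖z‖ < 1) :
    discInvolution a (discInvolution a z) = z := by
  rw [discInvolution_eq_div a z, discInvolution,
    blaschkeFactor_div a (one_sub_conj_mul_ne_zero ha hz),
    show a - z - a * (1 - conj a * z) = -(z * (1 - conj a * a)) by ring,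
    show 1 - conj a * z - conj a * (a - z) = 1 - conj a * a by ring,
    neg_div, neg_neg, mul_div_cancel_right₀ _ (one_sub_conj_mul_ne_zero ha ha)]

lemma discInvolution_eq_zero_iff (ha : ‖a‖ < 1) (hz : ‖z‖ < 1) :
    discInvolution a z = 0 ↔ z = a := by
  rw [discInvolution, neg_eq_zero, blaschkeFactor_eq_zero_iff ha hz]

lemma discInvolution_eq_left_iff (ha : ‖a‖ < 1) (hz : ‖z‖ < 1) :
    discInvolution a z = a ↔ z = 0 := by
  constructor
  · intro h
    rw [← discInvolution_discInvolution ha hz, h, discInvolution_self]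
  · rintro rfl
    exact discInvolution_zero_right a

lemma discInvolution_eq_self_iff (ha : ‖a‖ < 1) (hz : ‖z‖ < 1) :
    discInvolution a z = z ↔ conj a * z ^ 2 - 2 * z + a = 0 := by
  have hd := one_sub_conj_mul_ne_zero ha hz
  rw [discInvolution, blaschkeFactor, neg_div', div_eq_iff hd]
  constructor <;> intro h <;> linear_combination h

lemma eq_of_discInvolution_eq_self (ha : ‖a‖ < 1) (hz : ‖z‖ < 1) (hw : ‖w‖ < 1)
    (hfz : discInvolution a z = z) (hfw : discInvolution a w = w) : z = w := by
  rw [discInvolution_eq_self_iff ha hz] at hfz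
  rw [discInvolution_eq_self_iff ha hw] at hfw
  by_contra hne
  have hsum : conj a * (z + w) = 2 :=
    mul_left_cancel₀ (sub_ne_zero.mpr hne) (by linear_combination hfz - hfw)
  have hprod : conj a * (z * w) = a := by linear_combination z * hsum - hfz
  have hzw : ‖z‖ * ‖w‖ < 1 := mul_lt_one_of_nonneg_of_lt_one_left (norm_nonneg z) hz hw.le
  have hnorm := congrArg norm hprod
  rw [norm_mul, norm_mul, norm_conj] at hnorm
  have ha0 : a = 0 := norm_eq_zero.mp (by nlinarith [norm_nonneg a])
  simp [ha0] at hsum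

lemma blaschkeFactor_discInvolution (ha : ‖a‖ < 1) (hb : ‖b‖ < 1) (hz : ‖z‖ < 1) :
    blaschkeFactor b (discInvolution a z) =
      -((1 - conj a * b) / conj (1 - conj a * b)) * blaschkeFactor (discInvolution a b) z := by
  have hp := one_sub_conj_mul_ne_zero ha hb
  have hp' : conj (1 - conj a * b) ≠ 0 := (map_ne_zero _).mpr hp
  have hunit : (1 - conj a * b) / conj (1 - conj a * b) *
      (conj (1 - conj a * b) / (1 - conj a * b)) = 1 := by
    field_simp
  rw [discInvolution_eq_div a z, discInvolution_eq_div a b,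
    blaschkeFactor_div b (one_sub_conj_mul_ne_zero ha hz), blaschkeFactor_div_left z hp,
    neg_mul, ← mul_assoc, hunit, one_mul, ← neg_div]
  congr 1
  · ring
  · simp only [map_sub, map_mul, map_one, conj_conj]
    ring

lemma one_sub_conj_mul_mul_one_sub_conj_mul_discInvolution (ha : ‖a‖ < 1) (hb : ‖b‖ < 1) :
    (1 - conj a * b) * (1 - conj a * discInvolution a b) = 1 - conj a * a := by
  have hp := one_sub_conj_mul_ne_zero ha hb
  rw [discInvolution_eq_div]
  field_simp
  ring

lemma blaschkeFactor_mul_blaschkeFactor_discInvolution_comp (ha : ‖a‖ < 1) (hb : ‖b‖ < 1)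
    (hz : ‖z‖ < 1) :
    blaschkeFactor b (discInvolution a z) *
        blaschkeFactor (discInvolution a b) (discInvolution a z) =
      blaschkeFactor b z * blaschkeFactor (discInvolution a b) z := by
  have hb' := norm_discInvolution_lt_one ha hb
  set p := 1 - conj a * b
  set q := 1 - conj a * discInvolution a b
  have hpq : p * q = 1 - conj a * a := one_sub_conj_mul_mul_one_sub_conj_mul_discInvolution ha hb
  have hpq0 : p * q ≠ 0 := hpq ▸ one_sub_conj_mul_ne_zero ha ha
  have hunit : p / conj p * (q / conj q) = 1 := by
    rw [div_mul_div_comm, ← map_mul, hpq, map_sub, map_one, map_mul, conj_conj, mul_comm a,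
      ← hpq, div_self hpq0]
  rw [blaschkeFactor_discInvolution ha hb hz, blaschkeFactor_discInvolution ha hb' hz,
    discInvolution_discInvolution ha hb]
  linear_combination (blaschkeFactor b z * blaschkeFactor (discInvolution a b) z) * hunit

lemma discInvolution_eq_of_mapsTo_pair {c : ℂ} (ha : ‖a‖ < 1) (hb : ‖b‖ < 1) (hc : ‖c‖ < 1)
    (hbc : b ≠ c) (hσb : discInvolution a b = b ∨ discInvolution a b = c)
    (hσc : discInvolution a c = b ∨ discInvolution a c = c) : discInvolution a b = c := by
  refine hσb.resolve_left fun hfb => ?_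
  rcases hσc with h | hfc
  · exact hbc (by rw [← discInvolution_discInvolution ha hc, h, hfb])
  · exact hbc (eq_of_discInvolution_eq_self ha hb hc hfb hfc)

end

theorem degree_four_invariance_iff_general (a₁ a₂ a₃ : ℂ)
    (h₁ : ‖a₁‖ < 1) (h₂ : ‖a₂‖ < 1) (h₃ : ‖a₃‖ < 1)
    (h₂0 : a₂ ≠ 0) (h₃0 : a₃ ≠ 0)
    (h12 : a₁ ≠ a₂) (h13 : a₁ ≠ a₃) (h23 : a₂ ≠ a₃)
    (B : ℂ → ℂ)
    (hB : ∀ z, B z = z * ((z - a₁) / (1 - (starRingEnd ℂ) a₁ * z)) *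
      ((z - a₂) / (1 - (starRingEnd ℂ) a₂ * z)) *
      ((z - a₃) / (1 - (starRingEnd ℂ) a₃ * z)))
    (M : ℂ → ℂ)
    (hM : ∀ z, M z = -((z - a₁) / (1 - (starRingEnd ℂ) a₁ * z))) :
    (∀ z ∈ Metric.ball (0 : ℂ) 1, B (M z) = B z) ↔
      a₃ = (a₁ - a₂) / (1 - (starRingEnd ℂ) a₁ * a₂) := by
  obtain rfl : B = fun z ↦ z * blaschkeFactor a₁ z * blaschkeFactor a₂ z * blaschkeFactor a₃ z :=
    funext hB
  obtain rfl : M = discInvolution a₁ := funext hM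
  rw [← discInvolution_eq_div]
  constructor
  · intro hinv
    have hσ : ∀ b, ‖b‖ < 1 → b ≠ 0 → b ≠ a₁ → (b = a₂ ∨ b = a₃) →
        discInvolution a₁ b = a₂ ∨ discInvolution a₁ b = a₃ := by
      intro b hb hb0 hb1 hb23
      have hσb := norm_discInvolution_lt_one h₁ hb
      have hzero : discInvolution a₁ b * blaschkeFactor a₁ (discInvolution a₁ b) *
          blaschkeFactor a₂ (discInvolution a₁ b) *
          blaschkeFactor a₃ (discInvolution a₁ b) = 0 := by
        refine (hinv b (mem_ball_zero_iff.mpr hb)).trans ?_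
        rcases hb23 with rfl | rfl <;> simp [blaschkeFactor]
      simpa only [mul_eq_zero, blaschkeFactor_eq_zero_iff h₁ hσb,
        blaschkeFactor_eq_zero_iff h₂ hσb, blaschkeFactor_eq_zero_iff h₃ hσb,
        discInvolution_eq_zero_iff h₁ hb, discInvolution_eq_left_iff h₁ hb, hb0, hb1,
        false_or] using hzero
    exact (discInvolution_eq_of_mapsTo_pair h₁ h₂ h₃ h23
      (hσ a₂ h₂ h₂0 (Ne.symm h12) (.inl rfl)) (hσ a₃ h₃ h₃0 (Ne.symm h13) (.inr rfl))).symm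
  · rintro rfl z hz
    have hz' : ‖z‖ < 1 := mem_ball_zero_iff.mp hz
    have h0 := blaschkeFactor_mul_blaschkeFactor_discInvolution_comp h₁
      (norm_zero.trans_lt one_pos) hz'
    have h2 := blaschkeFactor_mul_blaschkeFactor_discInvolution_comp h₁ h₂ hz'
    simp only [blaschkeFactor_zero_left, discInvolution_zero_right] at h0
    linear_combination (blaschkeFactor a₂ (discInvolution a₁ z) *
      blaschkeFactor (discInvolution a₁ a₂) (discInvolution a₁ z)) * h0 +
      (z * blaschkeFactor a₁ z) * h2

/-- For the degree-4 Blaschke product with zeros `0, a₁, a₂, a₃` satisfying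
`a₁ + conj a₁ · a₂ a₃ = a₂ + a₃` and `M z = -(z - a₁)/(1 - conj a₁ z)`, we have
`B ∘ M = B` iff `a₃ = (a₁ - a₂)/(1 - conj a₁ · a₂)`. -/
theorem degree_four_invariance_iff (a₁ a₂ a₃ : ℂ)
    (h₁ : ‖a₁‖ < 1) (h₂ : ‖a₂‖ < 1) (h₃ : ‖a₃‖ < 1)
    (h₁0 : a₁ ≠ 0) (h₂0 : a₂ ≠ 0) (h₃0 : a₃ ≠ 0)
    (h12 : a₁ ≠ a₂) (h13 : a₁ ≠ a₃) (h23 : a₂ ≠ a₃)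
    (hcond : a₁ + (starRingEnd ℂ) a₁ * a₂ * a₃ = a₂ + a₃)
    (B : ℂ → ℂ)
    (hB : ∀ z, B z = z * ((z - a₁) / (1 - (starRingEnd ℂ) a₁ * z)) *
      ((z - a₂) / (1 - (starRingEnd ℂ) a₂ * z)) *
      ((z - a₃) / (1 - (starRingEnd ℂ) a₃ * z)))
    (M : ℂ → ℂ)
    (hM : ∀ z, M z = -((z - a₁) / (1 - (starRingEnd ℂ) a₁ * z))) :
    (∀ z ∈ Metric.ball (0 : ℂ) 1, B (M z) = B z) ↔
      a₃ = (a₁ - a₂) / (1 - (starRingEnd ℂ) a₁ * a₂) :=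
  degree_four_invariance_iff_general a₁ a₂ a₃ h₁ h₂ h₃ h₂0 h₃0 h12 h13 h23 B hB M hM
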